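/- Let S be a generalized telescopic semigroup in ℝ spanned by {α_i}_{i=1}^r with α₁,...,α_{r-1} positive rationals, α_r irrational, and the ordered semigroup ⟨α₁,...,α_{r-1}⟩ isomorphic to a telescopic semigroup ⟨β₁,...,β_{r-1}⟩ via α_i ↦ β_i. Then every α ∈ S has a unique expression α = Σ_{i=1}^r a_i α_i with a₁, a_r ≥ 0 and 0 ≤ a_i < gcd(β₁,...,β_{i-1})/gcd(β₁,...,β_i) for 2 ≤ i ≤ r−1. -/

import Mathlib

/-- `dtel α i = gcd(α₁, …, α_i)` (generators indexed from 1). -/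
def dtel (α : ℕ → ℕ) (i : ℕ) : ℕ := (Finset.Icc 1 i).gcd α

/-- A telescopic sequence `α₁, …, α_r` of positive integers. -/
def IsTelescopic (r : ℕ) (α : ℕ → ℕ) : Prop :=
  (∀ i, 1 ≤ i → i ≤ r → 0 < α i) ∧
  dtel α r = 1 ∧
  ∀ i, 2 ≤ i → i ≤ r →
    α i / dtel α i ∈
      AddSubmonoid.closure {x : ℕ | ∃ j, 1 ≤ j ∧ j < i ∧ x = α j / dtel α (i - 1)}

/-!
Write `d_k = gcd(β₁, …, β_k)` and `c_k = d_{k-1} / d_k`. Since `α_r` is irrational and the other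
generators are rational, two representations of the same element have the same coefficient of
`α_r`; the remaining parts are then equal, and the isomorphism `α_i ↦ β_i` transports the problem to
`⟨β₁, …, β_{r-1}⟩ ⊆ ℕ`. There, telescopicity says `c_k β_k` is a combination of `β₁, …, β_{k-1}`,
so working downwards from `k = r - 1` each coefficient can be reduced modulo `c_k`. Conversely,
modulo `d_{k-1}` only the term `a_k β_k` of a combination survives, and `gcd(β_k, d_{k-1}) = d_k`
forces `a_k` modulo `c_k`, which gives uniqueness.
-/

open Finset

theorem AddSubmonoid.exists_eq_sum_of_mem_closure_image {ι M : Type*} [AddCommMonoid M]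
    [DecidableEq ι] {f : ι → M} {s : Finset ι} {x : M} (hx : x ∈ closure (f '' s)) :
    ∃ a : ι → ℕ, (∀ i ∉ s, a i = 0) ∧ x = ∑ i ∈ s, a i • f i := by
  induction hx using closure_induction with
  | mem y hy =>
    obtain ⟨i, hi, rfl⟩ := hy
    refine ⟨Pi.single i 1, fun j hj => Pi.single_eq_of_ne (by rintro rfl; exact hj hi) _, ?_⟩
    rw [sum_eq_single_of_mem i hi fun j _ hji => by simp [Pi.single_eq_of_ne hji]]
    simp
  | zero => exact ⟨0, fun _ _ => rfl, by simp⟩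
  | add y z _ _ hy hz =>
    obtain ⟨a, ha, rfl⟩ := hy
    obtain ⟨b, hb, rfl⟩ := hz
    exact ⟨a + b, fun i hi => by simp [ha i hi, hb i hi], by simp [add_smul, sum_add_distrib]⟩

theorem Nat.eq_of_mul_modEq_of_lt_div_gcd {d c s t : ℕ} (hd : 0 < d)
    (h : s * c ≡ t * c [MOD d]) (hs : s < d / d.gcd c) (ht : t < d / d.gcd c) : s = t :=
  (Nat.ModEq.cancel_right_div_gcd hd h).eq_of_lt_of_lt hs ht

theorem Irrational.eq_of_add_natCast_mul_eq {x p q : ℝ} (hx : Irrational x)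
    (hp : p ∈ (Rat.castHom ℝ).fieldRange) (hq : q ∈ (Rat.castHom ℝ).fieldRange) {m n : ℕ}
    (h : p + m * x = q + n * x) : m = n := by
  by_contra hmn
  have hmn' : (m : ℝ) - n ≠ 0 := sub_ne_zero.mpr (Nat.cast_injective.ne hmn)
  have hx' : x = (q - p) / ((m : ℝ) - n) := by
    rw [eq_div_iff hmn']
    linear_combination h
  have hmem : x ∈ (Rat.castHom ℝ).fieldRange :=
    hx' ▸ div_mem (sub_mem hq hp) (sub_mem (natCast_mem _ m) (natCast_mem _ n))
  obtain ⟨y, hy⟩ := RingHom.mem_fieldRange.mp hmem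
  exact hx ⟨y, hy⟩

section dtel

variable (β : ℕ → ℕ)

theorem dtel_succ (k : ℕ) : dtel β (k + 1) = (dtel β k).gcd (β (k + 1)) := by
  rw [dtel, ← insert_Icc_right_eq_Icc_add_one (by omega), gcd_insert, Nat.gcd_comm]
  rfl

variable {β}

theorem dtel_dvd {j k : ℕ} (hj : j ∈ Icc 1 k) : dtel β k ∣ β j :=
  Finset.gcd_dvd hj

theorem dtel_succ_dvd (k : ℕ) : dtel β (k + 1) ∣ dtel β k :=
  dtel_succ β k ▸ Nat.gcd_dvd_left _ _

theorem dtel_pos (h1 : 0 < β 1) {k : ℕ} (hk : 1 ≤ k) : 0 < dtel β k :=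
  Nat.pos_of_ne_zero fun h => h1.ne' (gcd_eq_zero_iff.mp h 1 (mem_Icc.mpr ⟨le_rfl, hk⟩))

theorem dtel_dvd_sum (a : ℕ → ℕ) (k : ℕ) : dtel β k ∣ ∑ i ∈ Icc 1 k, a i * β i :=
  dvd_sum fun _ hi => Dvd.dvd.mul_left (dtel_dvd hi) _

end dtel

theorem eqOn_Icc_of_reduced_sum_eq {β : ℕ → ℕ} (h1 : 0 < β 1) {k : ℕ} {a b : ℕ → ℕ}
    (ha : ∀ i, 2 ≤ i → i ≤ k → a i < dtel β (i - 1) / dtel β i)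
    (hb : ∀ i, 2 ≤ i → i ≤ k → b i < dtel β (i - 1) / dtel β i)
    (h : ∑ i ∈ Icc 1 k, a i * β i = ∑ i ∈ Icc 1 k, b i * β i) : ∀ i ∈ Icc 1 k, a i = b i := by
  induction k with
  | zero => simp
  | succ k ih =>
    rw [sum_Icc_succ_top (by omega), sum_Icc_succ_top (by omega)] at h
    have htop : a (k + 1) = b (k + 1) := by
      rcases Nat.eq_zero_or_pos k with rfl | hk
      · simpa [h1.ne'] using h
      · have hlow : ∑ i ∈ Icc 1 k, a i * β i ≡ ∑ i ∈ Icc 1 k, b i * β i [MOD dtel β k] :=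
          (Nat.modEq_zero_iff_dvd.mpr (dtel_dvd_sum a k)).trans
            (Nat.modEq_zero_iff_dvd.mpr (dtel_dvd_sum b k)).symm
        refine Nat.eq_of_mul_modEq_of_lt_div_gcd (dtel_pos h1 hk)
          (Nat.ModEq.add_left_cancel hlow (by rw [h])) ?_ ?_
        · simpa [dtel_succ] using ha (k + 1) (by omega) le_rfl
        · simpa [dtel_succ] using hb (k + 1) (by omega) le_rfl
    rw [htop, Nat.add_right_cancel_iff] at h
    intro i hi
    rcases (mem_Icc.mp hi).2.lt_or_eq with hik | rfl
    · exact ih (fun i hi hik => ha i hi (by omega)) (fun i hi hik => hb i hi (by omega)) h i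
        (mem_Icc.mpr ⟨(mem_Icc.mp hi).1, by omega⟩)
    · exact htop

theorem eq_of_eqOn_Icc_of_eq_zero {n : ℕ} {a b : ℕ → ℕ} (ha : ∀ i, (i = 0 ∨ n < i) → a i = 0)
    (hb : ∀ i, (i = 0 ∨ n < i) → b i = 0) (h : ∀ i ∈ Icc 1 n, a i = b i) : a = b := by
  funext i
  by_cases hi : i ∈ Icc 1 n
  · exact h i hi
  · have hi' : i = 0 ∨ n < i := by simp at hi; omega
    rw [ha i hi', hb i hi']

namespace IsTelescopic

variable {m : ℕ} {β : ℕ → ℕ}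

theorem pos_length (hβ : IsTelescopic m β) : 0 < m :=
  Nat.pos_of_ne_zero fun h => by simpa [h, dtel] using hβ.2.1

theorem exists_mul_eq_sum (hβ : IsTelescopic m β) {k : ℕ} (hk : 1 ≤ k) (hkm : k + 1 ≤ m) :
    ∃ t : ℕ → ℕ, (∀ j ∉ Icc 1 k, t j = 0) ∧
      dtel β k / dtel β (k + 1) * β (k + 1) = ∑ j ∈ Icc 1 k, t j * β j := by
  have hmem := hβ.2.2 (k + 1) (by omega) hkm
  have hset : {x : ℕ | ∃ j, 1 ≤ j ∧ j < k + 1 ∧ x = β j / dtel β (k + 1 - 1)} =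
      (fun j => β j / dtel β k) '' ↑(Icc 1 k) := by
    ext x; simp [eq_comm, and_assoc]
  rw [hset] at hmem
  obtain ⟨t, ht, hsum⟩ := AddSubmonoid.exists_eq_sum_of_mem_closure_image hmem
  refine ⟨t, ht, ?_⟩
  calc dtel β k / dtel β (k + 1) * β (k + 1) = β (k + 1) / dtel β (k + 1) * dtel β k := by
        rw [Nat.div_mul_right_comm (dtel_succ_dvd k),
          Nat.div_mul_right_comm (dtel_dvd (mem_Icc.mpr ⟨by omega, le_rfl⟩)), mul_comm]
    _ = ∑ j ∈ Icc 1 k, t j * β j := by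
        rw [hsum, sum_mul]
        refine sum_congr rfl fun j hj => ?_
        rw [smul_eq_mul, mul_assoc, Nat.div_mul_cancel (dtel_dvd hj)]

theorem exists_reduced (hβ : IsTelescopic m β) {k : ℕ} (hkm : k ≤ m) (a : ℕ → ℕ) :
    ∃ b : ℕ → ℕ, (∀ i ∉ Icc 1 k, b i = a i) ∧
      (∀ i, 2 ≤ i → i ≤ k → b i < dtel β (i - 1) / dtel β i) ∧
      ∑ i ∈ Icc 1 k, b i * β i = ∑ i ∈ Icc 1 k, a i * β i := by
  induction k generalizing a with
  | zero => exact ⟨a, fun _ _ => rfl, fun i hi hi' => by omega, rfl⟩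
  | succ k ih =>
    rcases Nat.eq_zero_or_pos k with rfl | hk
    · exact ⟨a, fun _ _ => rfl, fun i hi hi' => by omega, rfl⟩
    have h1 : 0 < β 1 := hβ.1 1 le_rfl (by omega)
    obtain ⟨t, ht, hrel⟩ := hβ.exists_mul_eq_sum hk hkm
    set c := dtel β k / dtel β (k + 1)
    have hc : 0 < c := Nat.div_pos (Nat.le_of_dvd (dtel_pos h1 hk) (dtel_succ_dvd k))
      (dtel_pos h1 (by omega))
    set q := a (k + 1) / c
    set a' := Function.update (a + q • t) (k + 1) (a (k + 1) % c) with ha'_def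
    obtain ⟨b, hba, hb, hsum⟩ := ih (by omega) a'
    have hbtop : b (k + 1) = a (k + 1) % c := by
      rw [hba _ (by simp), ha'_def, Function.update_self]
    have ha' : ∑ i ∈ Icc 1 k, a' i * β i = ∑ i ∈ Icc 1 k, a i * β i + q * (c * β (k + 1)) := by
      rw [hrel, mul_sum, ← sum_add_distrib]
      refine sum_congr rfl fun i hi => ?_
      rw [ha'_def, Function.update_of_ne (by simp at hi; omega)]
      simp only [Pi.add_apply, Pi.smul_apply, smul_eq_mul]
      ring
    refine ⟨b, fun i hi => ?_, fun i hi hik => ?_, ?_⟩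
    · have hi' : i ∉ Icc 1 k := fun h => hi (Icc_subset_Icc_right (by omega) h)
      rw [hba i hi', ha'_def, Function.update_of_ne (by simp at hi; omega)]
      simp [ht i hi']
    · rcases hik.lt_or_eq with hik | rfl
      · exact hb i hi (by omega)
      · simpa [hbtop] using Nat.mod_lt _ hc
    · rw [sum_Icc_succ_top (by omega), sum_Icc_succ_top (by omega), hsum, ha', hbtop]
      conv_rhs => rw [← Nat.div_add_mod (a (k + 1)) c]
      ring

end IsTelescopic

theorem generalized_telescopic_R_unique_representation_general (r : ℕ)
    (α : ℕ → ℝ) (β : ℕ → ℕ) (hβ : IsTelescopic (r - 1) β)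
    (hrat : ∀ i, 1 ≤ i → i ≤ r - 1 → ∃ q : ℚ, 0 < q ∧ α i = (q : ℝ))
    (hirr : Irrational (α r))
    (hiso : ∀ a b : ℕ → ℕ,
      (∑ i ∈ Finset.Icc 1 (r - 1), (a i : ℝ) * α i =
          ∑ i ∈ Finset.Icc 1 (r - 1), (b i : ℝ) * α i) ↔
        (∑ i ∈ Finset.Icc 1 (r - 1), a i * β i = ∑ i ∈ Finset.Icc 1 (r - 1), b i * β i)) :
    ∀ x ∈ AddSubmonoid.closure {y : ℝ | ∃ i, 1 ≤ i ∧ i ≤ r ∧ y = α i},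
      ∃! a : ℕ → ℕ,
        (∀ i, (i = 0 ∨ r < i) → a i = 0) ∧
        (∀ i, 2 ≤ i → i ≤ r - 1 → a i < dtel β (i - 1) / dtel β i) ∧
        x = ∑ i ∈ Finset.Icc 1 r, (a i : ℝ) * α i := by
  obtain ⟨m, rfl⟩ : ∃ m, r = m + 1 := ⟨r - 1, by have := hβ.pos_length; omega⟩
  simp only [Nat.add_sub_cancel] at hβ hrat hiso ⊢
  have hset : {y : ℝ | ∃ i, 1 ≤ i ∧ i ≤ m + 1 ∧ y = α i} = α '' ↑(Icc 1 (m + 1)) := by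
    ext y; simp [eq_comm, and_assoc]
  have hlow_rat (c : ℕ → ℕ) : ∑ i ∈ Icc 1 m, (c i : ℝ) * α i ∈ (Rat.castHom ℝ).fieldRange :=
    sum_mem fun i hi => mul_mem (natCast_mem _ _) <| by
      obtain ⟨q, -, hq⟩ := hrat i (mem_Icc.mp hi).1 (mem_Icc.mp hi).2
      exact hq ▸ RingHom.mem_fieldRange_self _ q
  intro x hx
  rw [hset] at hx
  obtain ⟨a, ha, rfl⟩ := AddSubmonoid.exists_eq_sum_of_mem_closure_image hx
  simp only [nsmul_eq_mul, sum_Icc_succ_top (by omega : 1 ≤ m + 1)] at ha ⊢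
  obtain ⟨b, hba, hb, hsum⟩ := hβ.exists_reduced le_rfl a
  have hbx : ∑ i ∈ Icc 1 m, (b i : ℝ) * α i + b (m + 1) * α (m + 1) =
      ∑ i ∈ Icc 1 m, (a i : ℝ) * α i + a (m + 1) * α (m + 1) := by
    rw [(hiso b a).2 hsum, hba (m + 1) (by simp)]
  have hb0 : ∀ i, (i = 0 ∨ m + 1 < i) → b i = 0 := fun i hi => by
    rw [hba i (by simp; omega)]
    exact ha i (by simp; omega)
  refine ⟨b, ⟨hb0, hb, hbx.symm⟩, fun c ⟨hc0, hc, hcx⟩ => ?_⟩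
  have htop : c (m + 1) = b (m + 1) :=
    hirr.eq_of_add_natCast_mul_eq (hlow_rat c) (hlow_rat b) (hcx.symm.trans hbx.symm)
  have hlow : ∀ i ∈ Icc 1 m, c i = b i := by
    refine eqOn_Icc_of_reduced_sum_eq (hβ.1 1 le_rfl hβ.pos_length) hc hb ((hiso c b).1 ?_)
    rw [htop] at hcx
    linarith
  refine eq_of_eqOn_Icc_of_eq_zero hc0 hb0 fun i hi => ?_
  rcases (mem_Icc.mp hi).2.lt_or_eq with hi' | rfl
  · exact hlow i (mem_Icc.mpr ⟨(mem_Icc.mp hi).1, by omega⟩)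
  · exact htop

/-- unique representation in a generalized telescopic semigroup in ℝ:
`α₁, …, α_{r-1}` are positive rationals, `α_r` is irrational, and `⟨α₁,…,α_{r-1}⟩` is
isomorphic as an ordered semigroup to a telescopic semigroup `⟨β₁,…,β_{r-1}⟩` via
`α_i ↦ β_i`. Then every element of the semigroup spanned by the `α_i` is uniquely
`Σ a_i α_i` with `a₁, a_r ≥ 0` and `0 ≤ a_i < gcd(β₁,…,β_{i-1})/gcd(β₁,…,β_i)`
for `2 ≤ i ≤ r-1`. -/
theorem generalized_telescopic_R_unique_representation (r : ℕ) (hr : 2 ≤ r)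
    (α : ℕ → ℝ) (β : ℕ → ℕ) (hβ : IsTelescopic (r - 1) β)
    (hrat : ∀ i, 1 ≤ i → i ≤ r - 1 → ∃ q : ℚ, 0 < q ∧ α i = (q : ℝ))
    (hirr : Irrational (α r)) (hrpos : 0 < α r)
    (hwf : Set.IsWF {x : ℝ |
      x ∈ AddSubmonoid.closure {y : ℝ | ∃ i, 1 ≤ i ∧ i ≤ r ∧ y = α i}})
    (hiso : ∀ a b : ℕ → ℕ,
      (∑ i ∈ Finset.Icc 1 (r - 1), (a i : ℝ) * α i =
          ∑ i ∈ Finset.Icc 1 (r - 1), (b i : ℝ) * α i) ↔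
        (∑ i ∈ Finset.Icc 1 (r - 1), a i * β i = ∑ i ∈ Finset.Icc 1 (r - 1), b i * β i))
    (hord : ∀ a b : ℕ → ℕ,
      (∑ i ∈ Finset.Icc 1 (r - 1), (a i : ℝ) * α i ≤
          ∑ i ∈ Finset.Icc 1 (r - 1), (b i : ℝ) * α i) ↔
        (∑ i ∈ Finset.Icc 1 (r - 1), a i * β i ≤ ∑ i ∈ Finset.Icc 1 (r - 1), b i * β i)) :
    ∀ x ∈ AddSubmonoid.closure {y : ℝ | ∃ i, 1 ≤ i ∧ i ≤ r ∧ y = α i},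
      ∃! a : ℕ → ℕ,
        (∀ i, (i = 0 ∨ r < i) → a i = 0) ∧
        (∀ i, 2 ≤ i → i ≤ r - 1 → a i < dtel β (i - 1) / dtel β i) ∧
        x = ∑ i ∈ Finset.Icc 1 r, (a i : ℝ) * α i :=
  generalized_telescopic_R_unique_representation_general r α β hβ hrat hirr hiso
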